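/- arXiv:2112.13584 — 2 statements merged into one kernel-verified Lean document; each statement's English description precedes it below -/
import Mathlib

section
/- The generating function Σ_{n≥0} sp(n) x^n of the total number of symmetric peaks over all Dyck paths of length 2(n+1) equals (1/(2x))·(1 + (5x-1)/((1-x)·sqrt(1-4x))). -/
open PowerSeries

/-- A path (`true` = up step, `false` = down step) never goes below the x-axis. -/
def DyckNonneg (p : List Bool) : Prop :=
  ∀ q : List Bool, q <+: p → q.count false ≤ q.count true

/-- `p` is a Dyck path. -/
def IsDyck (p : List Bool) : Prop :=
  DyckNonneg p ∧ p.count true = p.count false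

/-- Dyck paths of length `m` with a distinguished symmetric peak
(a maximal mountain `u^a d^a`). -/
def SymPeakMarked (m : ℕ) : Type :=
  { q : List Bool × ℕ × List Bool //
      1 ≤ q.2.1 ∧
      q.1.getLast? ≠ some true ∧
      q.2.2.head? ≠ some false ∧
      IsDyck (q.1 ++ List.replicate q.2.1 true ++ List.replicate q.2.1 false ++ q.2.2) ∧
      (q.1 ++ List.replicate q.2.1 true ++ List.replicate q.2.1 false ++ q.2.2).length = m }

/-- sp(n): the total number of symmetric peaks over all Dyck paths of length 2(n+1). -/
noncomputable def sp (n : ℕ) : ℕ := Nat.card (SymPeakMarked (2 * (n + 1)))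

/-- The series 1/sqrt(1-4x) = Σ_{n≥0} binom(2n,n) x^n. -/
noncomputable def invSqrtGF : PowerSeries ℚ := PowerSeries.mk fun n => ((2 * n).choose n : ℚ)

/-!
Deleting the marked mountain `u^a d^a` leaves a Dyck path of semilength `n + 1 - a`, split at a
valley or at one of its two ends; hence `sp n = ∑_{k ≤ n} v k`, where `v k` counts such splittings
of paths of semilength `k`. A splitting of a path of semilength `k + 1` is either at its end, or
at the foot of the ascent to a unique peak; removing that peak leaves a path of semilength `k`
with one of its `2k + 1` positions marked. So `v (k + 1) = C k * (2k + 1) + C (k + 1)`, and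
`C k = binom(2k, k) / (k + 1)` turns this into
`2 v (k + 1) = 5 binom(2k+2, k+1) - binom(2k+4, k+2)`, which is the claimed identity for
`(1 - x) ∑ sp(n) x^n = ∑ v(k) x^k`.
-/

open List

theorem List.forall_prefix_append_iff {α : Type*} {P : List α → Prop} {l₁ l₂ : List α} :
    (∀ q, q <+: l₁ ++ l₂ → P q) ↔ (∀ q, q <+: l₁ → P q) ∧ ∀ r, r <+: l₂ → P (l₁ ++ r) := by
  refine ⟨fun h => ⟨fun q hq => h q (prefix_append_of_prefix hq),
    fun r hr => h _ ((prefix_append_right_inj l₁).2 hr)⟩, fun ⟨h₁, h₂⟩ q ⟨t, hq⟩ => ?_⟩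
  rcases append_eq_append_iff.1 hq with ⟨a, rfl, -⟩ | ⟨c, rfl, rfl⟩
  · exact h₁ q (prefix_append q a)
  · exact h₂ c (prefix_append c t)

theorem IsDyck.append_append_iff {A M B : List Bool} (hM : IsDyck M) :
    IsDyck (A ++ M ++ B) ↔ IsDyck (A ++ B) := by
  obtain ⟨hM, hMc⟩ := hM
  simp only [IsDyck, DyckNonneg, append_assoc, forall_prefix_append_iff, count_append] at hM ⊢
  constructor
  · rintro ⟨⟨hA, -, hB⟩, hc⟩
    exact ⟨⟨hA, fun r hr => by have := hB r hr; omega⟩, by omega⟩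
  · rintro ⟨⟨hA, hB⟩, hc⟩
    have hAA := hA A (prefix_refl A)
    exact ⟨⟨hA, fun r hr => by have := hM r hr; omega,
      fun r hr => by have := hB r hr; omega⟩, by omega⟩

theorem isDyck_replicate_append_replicate (a : ℕ) :
    IsDyck (replicate a true ++ replicate a false) := by
  refine ⟨forall_prefix_append_iff.2 ⟨fun q hq => ?_, fun r hr => ?_⟩, by simp [count_replicate]⟩
  · have := hq.sublist.count_le false
    simp [count_replicate] at this
    omega
  · have := hr.sublist.count_le false
    simp [count_replicate] at this ⊢
    omega

theorem isDyck_nil : IsDyck [] := by simpa using isDyck_replicate_append_replicate 0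

theorem isDyck_true_false : IsDyck [true, false] := isDyck_replicate_append_replicate 1

theorem isDyck_insert_mountain_iff (A B : List Bool) (a : ℕ) :
    IsDyck (A ++ replicate a true ++ replicate a false ++ B) ↔ IsDyck (A ++ B) := by
  rw [append_assoc A]
  exact (isDyck_replicate_append_replicate a).append_append_iff

theorem IsDyck.getLast?_eq_false {p : List Bool} (h : IsDyck p) (hp : p ≠ []) :
    p.getLast? = some false := by
  obtain ⟨q, b, rfl⟩ := (eq_nil_or_concat' p).resolve_left hp
  cases b
  · simp
  · have hq := h.1 q (prefix_append q [true])
    have hc := h.2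
    simp at hc
    omega

theorem IsDyck.getLast?_ne_true {p : List Bool} (h : IsDyck p) : p.getLast? ≠ some true := by
  rcases eq_or_ne p [] with rfl | hp
  · simp
  · simp [h.getLast?_eq_false hp]

theorem List.takeWhile_id_eq_replicate (l : List Bool) :
    l.takeWhile id = replicate (l.takeWhile id).length true :=
  eq_replicate_iff.2 ⟨rfl, fun _ hb => mem_takeWhile_imp hb⟩

theorem List.dropWhile_id_replicate_append {l : List Bool} (hl : l.head? ≠ some true) (i : ℕ) :
    (replicate i true ++ l).dropWhile id = l := by
  rw [dropWhile_append_of_pos (by simp)]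
  cases l with
  | nil => rfl
  | cons b l => cases b <;> simp_all

theorem List.takeWhile_id_replicate_append {l : List Bool} (hl : l.head? ≠ some true) (i : ℕ) :
    (replicate i true ++ l).takeWhile id = replicate i true := by
  rw [takeWhile_append_of_pos (by simp)]
  cases l with
  | nil => simp
  | cons b l => cases b <;> simp_all

def leadingTruesEquiv : ℕ × {l : List Bool // l.head? ≠ some true} ≃ List Bool where
  toFun x := replicate x.1 true ++ x.2
  invFun l := ((l.takeWhile id).length, ⟨l.dropWhile id, fun h => by
    simpa [h] using head?_dropWhile_not id l⟩)
  left_inv := fun ⟨i, l, hl⟩ => by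
    simp [takeWhile_id_replicate_append hl, dropWhile_id_replicate_append hl]
  right_inv l := by
    simp only [← takeWhile_id_eq_replicate, takeWhile_append_dropWhile]

@[simp] theorem leadingTruesEquiv_apply (x : ℕ × {l : List Bool // l.head? ≠ some true}) :
    leadingTruesEquiv x = replicate x.1 true ++ x.2 := rfl

def trailingTruesEquiv : {l : List Bool // l.getLast? ≠ some true} × ℕ ≃ List Bool where
  toFun x := x.1 ++ replicate x.2 true
  invFun l := (⟨(leadingTruesEquiv.symm l.reverse).2.1.reverse, by
    simpa [getLast?_reverse] using (leadingTruesEquiv.symm l.reverse).2.2⟩,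
    (leadingTruesEquiv.symm l.reverse).1)
  left_inv := fun ⟨⟨l, hl⟩, i⟩ => by
    have h : (l ++ replicate i true).reverse =
        leadingTruesEquiv (i, ⟨l.reverse, by simpa [head?_reverse]⟩) := by
      simp
    simp only [h, Equiv.symm_apply_apply, reverse_reverse]
  right_inv l := by
    have := congrArg reverse (leadingTruesEquiv.apply_symm_apply l.reverse)
    rwa [leadingTruesEquiv_apply, reverse_append, reverse_replicate, reverse_reverse] at this

@[simp] theorem trailingTruesEquiv_apply (x : {l : List Bool // l.getLast? ≠ some true} × ℕ) :
    trailingTruesEquiv x = x.1 ++ replicate x.2 true := rfl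

abbrev DyckPath (k : ℕ) : Type := {p : List Bool // IsDyck p ∧ p.length = 2 * k}

abbrev PeakSplit (k : ℕ) : Type :=
  {q : List Bool × List Bool // IsDyck (q.1 ++ [true, false] ++ q.2) ∧ (q.1 ++ q.2).length = 2 * k}

/-- Splittings `A ++ B` of a Dyck path of semilength `k` at a valley or at one of its ends. -/
abbrev ValleySplit (k : ℕ) : Type :=
  {q : List Bool × List Bool // q.1.getLast? ≠ some true ∧ q.2.head? ≠ some false ∧
    IsDyck (q.1 ++ q.2) ∧ (q.1 ++ q.2).length = 2 * k}

/-- The index `a` stands for the mountain `u^(a+1) d^(a+1)` that is cut out. -/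
def symPeakMarkedEquiv (n : ℕ) :
    SymPeakMarked (2 * (n + 1)) ≃ Σ a : Fin (n + 1), ValleySplit (n - a) where
  toFun x := ⟨⟨x.1.2.1 - 1, by
      have := x.2.2.2.2.2; simp only [length_append, length_replicate] at this; omega⟩,
    ⟨(x.1.1, x.1.2.2), x.2.2.1, x.2.2.2.1, (isDyck_insert_mountain_iff _ _ _).1 x.2.2.2.2.1, by
      have := x.2.2.2.2.2; have := x.2.1
      simp only [length_append, length_replicate] at *; omega⟩⟩
  invFun y := ⟨(y.2.1.1, y.1 + 1, y.2.1.2), Nat.le_add_left 1 _, y.2.2.1, y.2.2.2.1,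
    (isDyck_insert_mountain_iff _ _ _).2 y.2.2.2.2.1, by
      have := y.2.2.2.2.2; have := y.1.2
      simp only [length_append, length_replicate] at *; omega⟩
  left_inv := fun ⟨(A, a, B), ha, _⟩ => Subtype.ext (by dsimp only at ha ⊢; congr; omega)
  right_inv _ := rfl

def peakSplitEquiv (k : ℕ) : PeakSplit k ≃ DyckPath k × Fin (2 * k + 1) where
  toFun q := (⟨q.1.1 ++ q.1.2, isDyck_true_false.append_append_iff.1 q.2.1, q.2.2⟩,
    ⟨q.1.1.length, by have := q.2.2; simp at this; omega⟩)
  invFun x := ⟨(x.1.1.take x.2, x.1.1.drop x.2), by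
    rw [isDyck_true_false.append_append_iff, take_append_drop]; exact x.1.2.1, by
    rw [take_append_drop]; exact x.1.2.2⟩
  left_inv := fun ⟨(C, D), _⟩ => Subtype.ext (by simp)
  right_inv := fun ⟨⟨p, hp⟩, j, hj⟩ => by
    refine Prod.ext (Subtype.ext (take_append_drop j p)) (Fin.ext ?_)
    simp [hp.2]; omega

/-- Moves the split point of `(A, B)` to the first peak of `B`, removing that peak. -/
def cutFirstPeak (q : List Bool × List Bool) : List Bool × List Bool :=
  (q.1 ++ replicate ((leadingTruesEquiv.symm q.2).1 - 1) true,
    (leadingTruesEquiv.symm q.2).2.1.tail)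

def valleyBeforePeak (q : List Bool × List Bool) : List Bool × List Bool :=
  ((trailingTruesEquiv.symm q.1).1.1,
    replicate (trailingTruesEquiv.symm q.1).2 true ++ [true, false] ++ q.2)

theorem cutFirstPeak_append {A B : List Bool} (hD : IsDyck (A ++ B)) (hB : B.head? ≠ some false)
    (hne : B ≠ []) :
    (cutFirstPeak (A, B)).1 ++ [true, false] ++ (cutFirstPeak (A, B)).2 = A ++ B := by
  have hBR := (leadingTruesEquiv.apply_symm_apply B).symm
  simp only [cutFirstPeak, append_assoc, append_cancel_left_eq]
  generalize leadingTruesEquiv.symm B = y at hBR ⊢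
  obtain ⟨i, R, hR⟩ := y
  rw [leadingTruesEquiv_apply] at hBR
  subst hBR
  rcases R with _ | ⟨_ | _, R⟩
  · cases i with
    | zero => simp at hne
    | succ i =>
      have := hD.getLast?_eq_false (by simp)
      simp [replicate_succ'] at this
  · cases i with
    | zero => simp at hB
    | succ i => simp [replicate_succ']
  · exact absurd rfl hR

theorem valleyBeforePeak_append (q : List Bool × List Bool) :
    (valleyBeforePeak q).1 ++ (valleyBeforePeak q).2 = q.1 ++ [true, false] ++ q.2 := by
  have := trailingTruesEquiv.apply_symm_apply q.1
  rw [trailingTruesEquiv_apply] at this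
  conv_rhs => rw [← this]
  simp only [valleyBeforePeak, append_assoc]

theorem head?_valleyBeforePeak_snd (q : List Bool × List Bool) :
    (valleyBeforePeak q).2.head? = some true := by
  simp only [valleyBeforePeak]
  cases (trailingTruesEquiv.symm q.1).2 <;> simp [replicate_succ]

theorem valleyBeforePeak_cutFirstPeak {A B : List Bool} (hA : A.getLast? ≠ some true)
    (hD : IsDyck (A ++ B)) (hB : B.head? ≠ some false) (hne : B ≠ []) :
    valleyBeforePeak (cutFirstPeak (A, B)) = (A, B) := by
  have hcut := cutFirstPeak_append hD hB hne
  have htrail := trailingTruesEquiv.symm_apply_apply (⟨A, hA⟩, (leadingTruesEquiv.symm B).1 - 1)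
  rw [trailingTruesEquiv_apply] at htrail
  simp only [cutFirstPeak] at hcut ⊢
  simp only [valleyBeforePeak, htrail]
  simpa [append_assoc] using hcut

theorem cutFirstPeak_valleyBeforePeak (q : List Bool × List Bool) :
    cutFirstPeak (valleyBeforePeak q) = q := by
  have hlead := leadingTruesEquiv.symm_apply_apply
    ((trailingTruesEquiv.symm q.1).2 + 1, ⟨false :: q.2, by simp⟩)
  have htrail := trailingTruesEquiv.apply_symm_apply q.1
  simp only [leadingTruesEquiv_apply, replicate_succ', append_assoc, singleton_append] at hlead
  rw [trailingTruesEquiv_apply] at htrail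
  simp [cutFirstPeak, valleyBeforePeak, hlead, htrail]

def valleySplitEquiv (k : ℕ) : ValleySplit (k + 1) ≃ PeakSplit k ⊕ DyckPath (k + 1) where
  toFun x :=
    if hne : x.1.2 = [] then .inr ⟨x.1.1, by simpa [hne] using x.2.2.2⟩
    else .inl ⟨cutFirstPeak x.1, by
      have hcut : (cutFirstPeak x.1).1 ++ [true, false] ++ (cutFirstPeak x.1).2 = x.1.1 ++ x.1.2 :=
        cutFirstPeak_append x.2.2.2.1 x.2.2.1 hne
      refine ⟨by rw [hcut]; exact x.2.2.2.1, ?_⟩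
      have := congrArg length hcut
      have hlen := x.2.2.2.2
      simp only [length_append, length_cons, length_nil] at this hlen ⊢
      omega⟩
  invFun
    | .inl y => ⟨valleyBeforePeak y.1, (trailingTruesEquiv.symm y.1.1).1.2,
        by simp [head?_valleyBeforePeak_snd], by rw [valleyBeforePeak_append]; exact y.2.1, by
          have := y.2.2
          rw [valleyBeforePeak_append]
          simp only [length_append, length_cons, length_nil] at this ⊢
          omega⟩
    | .inr p => ⟨(p.1, []), p.2.1.getLast?_ne_true, by simp, by simpa using p.2.1,
        by simpa using p.2.2⟩
  left_inv := fun ⟨⟨A, B⟩, hA, hB, hD, hlen⟩ => by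
    by_cases hne : B = []
    · subst hne
      simp
    · simp only [dif_neg hne]
      exact Subtype.ext (valleyBeforePeak_cutFirstPeak hA hD hB hne)
  right_inv
    | .inl ⟨q, _⟩ => by
      have hne : (valleyBeforePeak q).2 ≠ [] := fun h => by
        simpa [h] using head?_valleyBeforePeak_snd q
      simp only [dif_neg hne]
      exact congrArg Sum.inl (Subtype.ext (cutFirstPeak_valleyBeforePeak q))
    | .inr p => by simp

def Bool.equivDyckStep : Bool ≃ DyckStep where
  toFun b := if b then .U else .D
  invFun s := s = .U
  left_inv b := by cases b <;> rfl
  right_inv s := by cases s <;> rfl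

theorem isDyck_iff_map_equivDyckStep (p : List Bool) : IsDyck p ↔
    (∀ i, ((p.map Bool.equivDyckStep).take i).count .D ≤
      ((p.map Bool.equivDyckStep).take i).count .U) ∧
    (p.map Bool.equivDyckStep).count .U = (p.map Bool.equivDyckStep).count .D := by
  have hU (l : List Bool) : (l.map Bool.equivDyckStep).count .U = l.count true :=
    count_map_of_injective l _ Bool.equivDyckStep.injective true
  have hD (l : List Bool) : (l.map Bool.equivDyckStep).count .D = l.count false :=
    count_map_of_injective l _ Bool.equivDyckStep.injective false
  have hnonneg : DyckNonneg p ↔ ∀ i, (p.take i).count false ≤ (p.take i).count true :=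
    ⟨fun h i => h _ (take_prefix i p), fun h q hq => prefix_iff_eq_take.1 hq ▸ h _⟩
  simp only [IsDyck, hnonneg, ← map_take, hU, hD]

def dyckWordEquiv : {p : List Bool // IsDyck p} ≃ DyckWord where
  toFun p := ⟨p.1.map Bool.equivDyckStep, ((isDyck_iff_map_equivDyckStep p.1).1 p.2).2,
    ((isDyck_iff_map_equivDyckStep p.1).1 p.2).1⟩
  invFun w := ⟨w.toList.map Bool.equivDyckStep.symm, (isDyck_iff_map_equivDyckStep _).2
    (by simpa [map_map] using ⟨w.count_D_le_count_U, w.count_U_eq_count_D⟩)⟩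
  left_inv p := Subtype.ext (by simp [map_map])
  right_inv w := DyckWord.ext (by simp [map_map])

def dyckPathEquiv (k : ℕ) : DyckPath k ≃ {w : DyckWord // w.semilength = k} :=
  (Equiv.subtypeSubtypeEquivSubtypeInter _ _).symm.trans <|
    dyckWordEquiv.subtypeEquiv fun p => by
      have hlen : (dyckWordEquiv p).toList.length = p.1.length := length_map _
      have := (dyckWordEquiv p).two_mul_semilength_eq_length
      omega

instance (k : ℕ) : Finite (DyckPath k) := .of_equiv _ (dyckPathEquiv k).symm

theorem card_dyckPath (k : ℕ) : Nat.card (DyckPath k) = catalan k := by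
  rw [Nat.card_congr (dyckPathEquiv k), Nat.card_eq_fintype_card,
    DyckWord.card_dyckWord_semilength_eq_catalan]

instance (k : ℕ) : Finite (PeakSplit k) := .of_equiv _ (peakSplitEquiv k).symm

theorem card_valleySplit_zero : Nat.card (ValleySplit 0) = 1 := by
  refine Nat.card_eq_one_iff_exists.2 ⟨⟨([], []), by simp, by simp, isDyck_nil, rfl⟩, ?_⟩
  rintro ⟨⟨A, B⟩, -, -, -, hlen⟩
  simp at hlen
  simp [hlen]

instance : (k : ℕ) → Finite (ValleySplit k)
  | 0 => Nat.finite_of_card_ne_zero (by simp [card_valleySplit_zero])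
  | k + 1 => .of_equiv _ (valleySplitEquiv k).symm

theorem card_valleySplit_succ (k : ℕ) :
    Nat.card (ValleySplit (k + 1)) = catalan k * (2 * k + 1) + catalan (k + 1) := by
  rw [Nat.card_congr (valleySplitEquiv k), Nat.card_sum, Nat.card_congr (peakSplitEquiv k),
    Nat.card_prod, card_dyckPath, card_dyckPath, Nat.card_fin]

theorem sp_eq_sum_card_valleySplit (n : ℕ) :
    sp n = ∑ k ∈ Finset.range (n + 1), Nat.card (ValleySplit k) := by
  rw [sp, Nat.card_congr (symPeakMarkedEquiv n), Nat.card_sigma,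
    Fin.sum_univ_eq_sum_range (fun a => Nat.card (ValleySplit (n - a)))]
  simpa using Finset.sum_range_reflect (fun k => Nat.card (ValleySplit k)) (n + 1)

theorem two_mul_card_valleySplit_succ (m : ℕ) :
    2 * (Nat.card (ValleySplit (m + 1)) : ℚ) =
      5 * (m + 1).centralBinom - (m + 2).centralBinom := by
  have hcat (n : ℕ) : (n + 1 : ℚ) * catalan n = n.centralBinom := by
    exact_mod_cast succ_mul_catalan_eq_centralBinom n
  have hbinom (n : ℕ) :
      (n + 1 : ℚ) * (n + 1).centralBinom = 2 * (2 * n + 1) * n.centralBinom := by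
    exact_mod_cast Nat.succ_mul_centralBinom_succ n
  have h0 := hcat m
  have h1 := hcat (m + 1)
  have h2 := hbinom m
  have h3 := hbinom (m + 1)
  push_cast at h1 h3
  rw [card_valleySplit_succ]
  push_cast
  apply mul_left_cancel₀ (by positivity : ((m : ℚ) + 1) * ((m : ℚ) + 2) ≠ 0)
  linear_combination (2 * (2 * (m : ℚ) + 1) * (m + 2)) * h0 + (2 * ((m : ℚ) + 1)) * h1
    - ((m : ℚ) + 2) * h2 + ((m : ℚ) + 1) * h3

theorem PowerSeries.one_sub_X_mul_mk_sum_range {R : Type*} [CommRing R] (f : ℕ → R) :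
    (1 - X) * mk (fun n => ∑ i ∈ Finset.range (n + 1), f i) = mk f := by
  ext (_ | n) <;> simp [sub_mul, coeff_succ_X_mul, Finset.sum_range_succ]

theorem two_mul_X_mul_mk_card_valleySplit :
    2 * X * mk (fun k => (Nat.card (ValleySplit k) : ℚ)) = (1 - X) + (5 * X - 1) * invSqrtGF := by
  rw [← map_ofNat C 2, ← map_ofNat C 5]
  ext (_ | _ | m)
  · simp [invSqrtGF]
  · simp [invSqrtGF, card_valleySplit_zero, mul_assoc, sub_mul, coeff_succ_X_mul, coeff_X]
    norm_num
  · simp [invSqrtGF, mul_assoc, sub_mul, coeff_succ_X_mul, coeff_X]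
    exact two_mul_card_valleySplit_succ m

/-- Σ_{n≥0} sp(n) x^n = (1/(2x))·(1 + (5x-1)/((1-x)·sqrt(1-4x))), stated with
denominators cleared: 2x(1-x)·Σ sp(n)x^n = (1-x) + (5x-1)/sqrt(1-4x). -/
theorem sp_generating_function :
    2 * (X : PowerSeries ℚ) * (1 - X) * PowerSeries.mk (fun n => (sp n : ℚ))
      = (1 - X) + (5 * X - 1) * invSqrtGF := by
  simp_rw [sp_eq_sum_card_valleySplit, Nat.cast_sum]
  rw [mul_assoc, one_sub_X_mul_mk_sum_range, two_mul_X_mul_mk_card_valleySplit]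
end

section
/- For r ≥ 0, k ≥ 0 and n ≥ k+r+1, the total number of symmetric peaks of weight k+1 over all partial Dyck paths from (0,0) to (2n-r, r) equals ((r+1)·((n-k+1)(n-k-r) − 2) / ((2(n-k)-r-2)(2(n-k)-r-1))) · binom(2(n-k)-r-1, n-k). -/
/-- Partial Dyck paths from (0,0) to (2n-r, r) (n up steps, n-r down steps, never
below the x-axis) with a distinguished symmetric peak of weight k+1: a decomposition
`A ++ u^{k+1} ++ d^{k+1} ++ B` with both runs maximal. -/
def PartialSymPeakMarked (n r k : ℕ) : Type :=
  { q : List Bool × List Bool //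
      q.1.getLast? ≠ some true ∧
      q.2.head? ≠ some false ∧
      DyckNonneg (q.1 ++ List.replicate (k + 1) true ++ List.replicate (k + 1) false ++ q.2) ∧
      (q.1 ++ List.replicate (k + 1) true ++ List.replicate (k + 1) false ++ q.2).count true
        = n ∧
      (q.1 ++ List.replicate (k + 1) true ++ List.replicate (k + 1) false ++ q.2).length
        = 2 * n - r }

/-!
Contracting the marked mountain `u^{k+1} d^{k+1}` turns a marked path into a ballot path with
`a = n - k - 1` up-steps and `b = n - r - k - 1` down-steps, cut at a point that is neither inside
an ascent nor inside a descent (a good cut). Apart from the initial cut, good cuts correspond to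
peaks: slide the cut from the peak down to the foot of its descent. Contracting the peak, the
peaks of ballot paths of type `(a + 1, b + 1)` correspond to the `a + b + 1` cuts of ballot paths
of type `(a, b)`. Hence the count is `B(a + 1, b + 1) + (a + b + 1) B(a, b)`, where the ballot
numbers `B(a, b) = C(a + b, a) - C(a + b, a + 1) = (a + 1 - b) / (a + 1) · C(a + b, b)` follow
from Pascal's recursion by removing the last step; the closed form is then a binomial identity.
-/

open List

theorem List.prefix_append_iff {α : Type*} {q l₁ l₂ : List α} :
    q <+: l₁ ++ l₂ ↔ q <+: l₁ ∨ ∃ t, t <+: l₂ ∧ q = l₁ ++ t := by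
  refine ⟨fun h => ?_, ?_⟩
  · rcases le_or_gt q.length l₁.length with hl | hl
    · exact .inl (prefix_of_prefix_length_le h (prefix_append l₁ l₂) hl)
    · obtain ⟨t, rfl⟩ := prefix_of_prefix_length_le (prefix_append l₁ l₂) h hl.le
      exact .inr ⟨t, (prefix_append_right_inj l₁).1 h, rfl⟩
  · rintro (h | ⟨t, ht, rfl⟩)
    · exact prefix_append_of_prefix h
    · exact (prefix_append_right_inj l₁).2 ht

theorem List.rdropWhile_append_of_forall {α : Type*} {p : α → Bool} {l m : List α}
    (h : ∀ x ∈ m, p x) : (l ++ m).rdropWhile p = l.rdropWhile p := by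
  simp [rdropWhile, dropWhile_append_of_pos (p := p) (l₁ := m.reverse) (by simpa using h)]

theorem List.rtakeWhile_append_of_forall {α : Type*} {p : α → Bool} {l m : List α}
    (h : ∀ x ∈ m, p x) : (l ++ m).rtakeWhile p = l.rtakeWhile p ++ m := by
  simp [rtakeWhile, takeWhile_append_of_pos (p := p) (l₁ := m.reverse) (by simpa using h)]

section

variable {p A B : List Bool}

theorem DyckNonneg.of_prefix (h : DyckNonneg p) (hA : A <+: p) : DyckNonneg A :=
  fun q hq => h q (hq.trans hA)

theorem DyckNonneg.count_false_le (h : DyckNonneg p) : p.count false ≤ p.count true :=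
  h p (prefix_refl p)

theorem DyckNonneg.head?_ne_some_false (h : DyckNonneg p) : p.head? ≠ some false := by
  rcases p with _ | ⟨_ | _, p⟩
  · simp
  · simpa using h [false] ⟨p, rfl⟩
  · simp

theorem dyckNonneg_append_iff :
    DyckNonneg (A ++ B) ↔
      DyckNonneg A ∧ ∀ t, t <+: B → (A ++ t).count false ≤ (A ++ t).count true := by
  simp only [DyckNonneg, List.prefix_append_iff]
  grind

theorem DyckNonneg.concat {x : Bool} (h : DyckNonneg p)
    (hx : (p ++ [x]).count false ≤ (p ++ [x]).count true) : DyckNonneg (p ++ [x]) := by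
  refine dyckNonneg_append_iff.2 ⟨h, fun t ht => ?_⟩
  rcases prefix_cons_iff.1 ht with rfl | ⟨_, rfl, hs⟩
  · simpa using h.count_false_le
  · rwa [prefix_nil.1 hs]

theorem dyckNonneg_append_peak_iff :
    DyckNonneg (A ++ true :: false :: B) ↔ DyckNonneg (A ++ B) := by
  simp only [dyckNonneg_append_iff]
  refine and_congr_right fun hA => ⟨fun h t ht => ?_, fun h t ht => ?_⟩
  · have := h (true :: false :: t) (by simpa using ht)
    grind
  · have := hA.count_false_le
    rcases prefix_cons_iff.1 ht with rfl | ⟨_, rfl, ht'⟩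
    · simpa using this
    rcases prefix_cons_iff.1 ht' with rfl | ⟨s, rfl, hs⟩
    · grind
    · have := h s hs
      grind

theorem dyckNonneg_append_mountain_iff (j : ℕ) :
    DyckNonneg (A ++ replicate j true ++ replicate j false ++ B) ↔ DyckNonneg (A ++ B) := by
  induction j generalizing A B with
  | zero => simp
  | succ j ih =>
    have e : A ++ replicate (j + 1) true ++ replicate (j + 1) false ++ B
        = (A ++ replicate j true) ++ true :: false :: (replicate j false ++ B) := by
      rw [replicate_succ' (a := true), replicate_succ (a := false)]
      simp only [append_assoc, cons_append, nil_append]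
    rw [e, dyckNonneg_append_peak_iff]
    simpa only [append_assoc] using ih

end

namespace PartialSymPeak

structure IsBallot (a b : ℕ) (p : List Bool) : Prop where
  nonneg : DyckNonneg p
  count_true : p.count true = a
  count_false : p.count false = b

abbrev BallotPath (a b : ℕ) : Type := {p : List Bool // IsBallot a b p}

variable {a b : ℕ} {p : List Bool}

theorem IsBallot.length_eq (h : IsBallot a b p) : p.length = a + b := by
  rw [← count_true_add_count_false, h.count_true, h.count_false]

theorem isBallot_iff :
    IsBallot a b p ↔ DyckNonneg p ∧ p.count true = a ∧ p.count false = b :=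
  ⟨fun ⟨h₁, h₂, h₃⟩ => ⟨h₁, h₂, h₃⟩, fun ⟨h₁, h₂, h₃⟩ => ⟨h₁, h₂, h₃⟩⟩

theorem isBallot_append_mountain_iff {j : ℕ} {A B : List Bool} :
    IsBallot (a + j) (b + j) (A ++ replicate j true ++ replicate j false ++ B)
      ↔ IsBallot a b (A ++ B) := by
  simp only [isBallot_iff, dyckNonneg_append_mountain_iff]
  grind

theorem isBallot_append_peak_iff {A B : List Bool} :
    IsBallot (a + 1) (b + 1) (A ++ [true] ++ false :: B) ↔ IsBallot a b (A ++ B) := by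
  simpa using isBallot_append_mountain_iff (j := 1) (A := A) (B := B)

instance (a b : ℕ) : Finite (BallotPath a b) :=
  ((List.finite_length_le Bool (a + b)).subset
    fun _ hp => (IsBallot.length_eq hp).le).to_subtype

theorem card_ballotPath_zero_right (a : ℕ) : Nat.card (BallotPath a 0) = 1 := by
  refine Nat.card_eq_one_iff_exists.2
    ⟨⟨replicate a true, ?_, by simp, by simp [count_replicate]⟩, ?_⟩
  · intro q hq
    simp [(hq.sublist.count_le false).trans (by simp [count_replicate])]
  · rintro ⟨p, -, hp, hp'⟩
    refine Subtype.ext (show p = replicate a true from eq_replicate_iff.2 ⟨?_, fun x hx => ?_⟩)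
    · rw [← count_true_add_count_false, hp, hp', add_zero]
    · cases x
      · exact absurd (count_pos_iff.2 hx) (by omega)
      · rfl

theorem card_ballotPath_of_lt (h : a < b) : Nat.card (BallotPath a b) = 0 := by
  have : IsEmpty (BallotPath a b) := ⟨fun ⟨_, hp, ha, hb⟩ => by
    have := hp.count_false_le
    omega⟩
  exact Nat.card_of_isEmpty

def ballotPathSnoc (hb : b ≤ a) :
    BallotPath a (b + 1) ⊕ BallotPath (a + 1) b → BallotPath (a + 1) (b + 1) :=
  Sum.elim
    (fun p => ⟨p.1 ++ [true],
      p.2.nonneg.concat (by simpa [p.2.count_true, p.2.count_false]),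
      by simp [p.2.count_true], by simp [p.2.count_false]⟩)
    (fun p => ⟨p.1 ++ [false],
      p.2.nonneg.concat (by simpa [p.2.count_true, p.2.count_false]),
      by simp [p.2.count_true], by simp [p.2.count_false]⟩)

theorem ballotPathSnoc_bijective (hb : b ≤ a) : Function.Bijective (ballotPathSnoc hb) := by
  constructor
  · rintro (⟨p, hp⟩ | ⟨p, hp⟩) (⟨q, hq⟩ | ⟨q, hq⟩) h <;> simp_all [ballotPathSnoc]
  · rintro ⟨p, hp, ha, hb⟩
    rcases eq_nil_or_concat p with rfl | ⟨q, _ | _, rfl⟩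
    · simp at ha
    all_goals
      simp only [concat_eq_append] at hp ha hb
    · exact ⟨.inr ⟨q, hp.of_prefix (prefix_append _ _), by simpa using ha, by simpa using hb⟩,
        Subtype.ext (by simp [ballotPathSnoc])⟩
    · exact ⟨.inl ⟨q, hp.of_prefix (prefix_append _ _), by simpa using ha, by simpa using hb⟩,
        Subtype.ext (by simp [ballotPathSnoc])⟩

theorem card_ballotPath_succ_succ (hb : b ≤ a) :
    Nat.card (BallotPath (a + 1) (b + 1))
      = Nat.card (BallotPath a (b + 1)) + Nat.card (BallotPath (a + 1) b) := by
  rw [← Nat.card_sum, Nat.card_congr (Equiv.ofBijective _ (ballotPathSnoc_bijective hb))]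

theorem card_ballotPath_add_choose :
    ∀ a b : ℕ, b ≤ a + 1 →
      Nat.card (BallotPath a b) + (a + b).choose (a + 1) = (a + b).choose a
  | a, 0, _ => by simp [card_ballotPath_zero_right]
  | 0, b + 1, hb => by
    obtain rfl : b = 0 := by omega
    simp [card_ballotPath_of_lt]
  | a + 1, b + 1, hb => by
    rcases eq_or_lt_of_le hb with hb | hb
    · obtain rfl : b = a + 1 := by omega
      rw [card_ballotPath_of_lt (by omega), zero_add,
        show a + 1 + (a + 1 + 1) = 2 * (a + 1) + 1 by ring, Nat.choose_symm_half]
    · have h₁ := card_ballotPath_add_choose a (b + 1) (by omega)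
      have h₂ := card_ballotPath_add_choose (a + 1) b (by omega)
      rw [card_ballotPath_succ_succ (by omega), show a + 1 + (b + 1) = a + b + 1 + 1 by ring,
        Nat.choose_succ_succ', Nat.choose_succ_succ' (a + b + 1) a]
      rw [show a + (b + 1) = a + b + 1 by ring] at h₁
      rw [show a + 1 + b = a + b + 1 by ring] at h₂
      omega

theorem card_ballotPath_mul (r b : ℕ) :
    Nat.card (BallotPath (r + b) b) * (r + b + 1) = (r + 1) * (r + b + b).choose b := by
  have h₁ := card_ballotPath_add_choose (r + b) b (by omega)
  have h₂ := Nat.choose_succ_right_eq (r + b + b) (r + b)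
  rw [Nat.choose_symm_add, show r + b + b - (r + b) = b by omega] at *
  zify at h₁ h₂ ⊢
  linear_combination (↑r + ↑b + 1 : ℤ) * h₁ - h₂

abbrev Cut (P : List Bool × List Bool → Prop) (a b : ℕ) : Type :=
  {q : List Bool × List Bool // IsBallot a b (q.1 ++ q.2) ∧ P q}

instance (P : List Bool × List Bool → Prop) (a b : ℕ) : Finite (Cut P a b) := by
  refine (((List.finite_length_le Bool (a + b)).prod
    (List.finite_length_le Bool (a + b))).subset fun q hq => ?_).to_subtype
  have := hq.1.length_eq
  simp only [length_append] at this
  exact ⟨show q.1.length ≤ a + b by omega, show q.2.length ≤ a + b by omega⟩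

def cutEquiv (a b : ℕ) : BallotPath a b × Fin (a + b + 1) ≃ Cut (fun _ => True) a b where
  toFun x := ⟨(x.1.1.take x.2, x.1.1.drop x.2), by simpa using x.1.2, trivial⟩
  invFun q := (⟨q.1.1 ++ q.1.2, q.2.1⟩, ⟨q.1.1.length, by
    have := q.2.1.length_eq
    simp only [length_append] at this
    omega⟩)
  left_inv x := by
    have := x.1.2.length_eq
    ext
    · simp
    · simp only [length_take, inf_eq_left]
      omega
  right_inv q := by ext <;> simp

theorem card_cut_true (a b : ℕ) :
    Nat.card (Cut (fun _ => True) a b) = (a + b + 1) * Nat.card (BallotPath a b) := by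
  rw [← Nat.card_congr (cutEquiv a b), Nat.card_prod, Nat.card_fin, mul_comm]

def IsPeakCut (q : List Bool × List Bool) : Prop :=
  q.1.getLast? = some true ∧ q.2.head? = some false

def peakCutEquiv (a b : ℕ) : Cut (fun _ => True) a b ≃ Cut IsPeakCut (a + 1) (b + 1) where
  toFun q := ⟨(q.1.1 ++ [true], false :: q.1.2), isBallot_append_peak_iff.2 q.2.1,
    by simp [IsPeakCut]⟩
  invFun q := ⟨(q.1.1.dropLast, q.1.2.tail), isBallot_append_peak_iff.1 (by
    rw [dropLast_append_getLast? true q.2.2.1, cons_head?_tail q.2.2.2]; exact q.2.1), trivial⟩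
  left_inv q := by simp
  right_inv q := by
    ext1
    simp [dropLast_append_getLast? true q.2.2.1, cons_head?_tail q.2.2.2]

/-- Cutting here and inserting a mountain `u^j d^j` keeps both of its runs maximal. -/
def IsGoodCut (q : List Bool × List Bool) : Prop :=
  q.1.getLast? ≠ some true ∧ q.2.head? ≠ some false

def slideDown (q : List Bool × List Bool) : List Bool × List Bool :=
  (q.1 ++ q.2.takeWhile not, q.2.dropWhile not)

def slideUp (q : List Bool × List Bool) : List Bool × List Bool :=
  (q.1.rdropWhile not, q.1.rtakeWhile not ++ q.2)

variable {q : List Bool × List Bool}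

theorem slideDown_append : (slideDown q).1 ++ (slideDown q).2 = q.1 ++ q.2 := by
  simp [slideDown]

theorem slideUp_append : (slideUp q).1 ++ (slideUp q).2 = q.1 ++ q.2 := by
  simp [slideUp, ← append_assoc, rdropWhile_append_rtakeWhile]

theorem slideUp_slideDown (h : q.1.getLast? = some true) : slideUp (slideDown q) = q := by
  obtain ⟨A, B⟩ := q
  obtain ⟨A, rfl⟩ := getLast?_eq_some_iff.1 h
  have hB : ∀ x ∈ B.takeWhile not, not x := fun x hx => mem_takeWhile_imp hx
  simp only [slideUp, slideDown]
  rw [rdropWhile_append_of_forall hB, rtakeWhile_append_of_forall hB]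
  simp

theorem slideDown_slideUp (h : q.2.head? ≠ some false) : slideDown (slideUp q) = q := by
  obtain ⟨A, B⟩ := q
  have hA : ∀ x ∈ A.rtakeWhile not, not x := fun x hx => mem_rtakeWhile_imp hx
  have hB : B.takeWhile not = [] ∧ B.dropWhile not = B := by
    rcases B with _ | ⟨_ | _, B⟩ <;> simp_all
  simp [slideUp, slideDown, takeWhile_append_of_pos hA, dropWhile_append_of_pos hA, hB,
    rdropWhile_append_rtakeWhile]

theorem isGoodCut_slideDown (h : IsPeakCut q) : IsGoodCut (slideDown q) := by
  obtain ⟨A, B⟩ := q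
  obtain ⟨B, rfl⟩ := head?_eq_some_iff.1 h.2
  refine ⟨fun hlast => ?_, fun hhead => ?_⟩
  · have hT : true ∈ (false :: B).takeWhile not :=
      mem_of_getLast? (by simpa [slideDown, getLast?_append] using hlast)
    simpa using mem_takeWhile_imp hT
  · have := head?_dropWhile_not not (false :: B)
    simp only [slideDown] at hhead
    rw [hhead] at this
    simp at this

theorem isPeakCut_slideUp (hA : DyckNonneg q.1) (hne : q.1 ≠ []) (h : IsGoodCut q) :
    IsPeakCut (slideUp q) := by
  obtain ⟨A, B⟩ := q
  obtain ⟨A, x, rfl⟩ := (eq_nil_or_concat A).resolve_left hne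
  obtain rfl : x = false := by simpa [IsGoodCut] using h.1
  simp only [concat_eq_append] at hA
  have hall : ∀ {l : List Bool}, l ≠ [] → (∀ y ∈ l, y = false) → l.head? = some false :=
    fun hl hl' => by rw [head?_eq_some_head hl, hl' _ (head_mem hl)]
  have hD : A.rdropWhile not ≠ [] := fun hnil =>
    hA.head?_ne_some_false (hall (by simp) (by simpa [rdropWhile_eq_nil_iff] using hnil))
  refine ⟨?_, ?_⟩
  · simp only [slideUp, concat_eq_append, rdropWhile_concat_pos not A false rfl]
    rw [getLast?_eq_some_getLast hD]
    simpa using rdropWhile_last_not _ _ hD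
  · simp only [slideUp, concat_eq_append, rtakeWhile_concat_pos not A false rfl]
    rw [head?_append_of_ne_nil _ (by simp)]
    refine hall (by simp) fun y hy => ?_
    simpa using (mem_append.1 hy).imp_left mem_rtakeWhile_imp

def goodCutEquiv (a b : ℕ) : BallotPath a b ⊕ Cut IsPeakCut a b ≃ Cut IsGoodCut a b where
  toFun := Sum.elim
    (fun p => ⟨([], p.1), by simpa using p.2, by simp, p.2.nonneg.head?_ne_some_false⟩)
    (fun q => ⟨slideDown q.1, by rw [slideDown_append]; exact q.2.1, isGoodCut_slideDown q.2.2⟩)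
  invFun q :=
    if hq : q.1.1 = [] then .inl ⟨q.1.2, by simpa [hq] using q.2.1⟩
    else .inr ⟨slideUp q.1, by rw [slideUp_append]; exact q.2.1,
      isPeakCut_slideUp (q.2.1.nonneg.of_prefix (prefix_append _ _)) hq q.2.2⟩
  left_inv := by
    rintro (p | q)
    · simp
    · have hne : (slideDown q.1).1 ≠ [] := by
        obtain ⟨A, hA⟩ := getLast?_eq_some_iff.1 q.2.2.1
        simp [slideDown, hA]
      simp [hne, slideUp_slideDown q.2.2.1]
  right_inv q := by
    by_cases hq : q.1.1 = []
    · ext1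
      simp [hq, Prod.ext_iff]
    · simp [hq, slideDown_slideUp q.2.2.2]

theorem card_goodCut_zero_right (a : ℕ) : Nat.card (Cut IsGoodCut a 0) = 1 := by
  have : IsEmpty (Cut IsPeakCut a 0) := ⟨fun q => by
    obtain ⟨B, hB⟩ := head?_eq_some_iff.1 q.2.2.2
    simpa [hB] using q.2.1.count_false⟩
  rw [← Nat.card_congr (goodCutEquiv a 0), Nat.card_sum, card_ballotPath_zero_right,
    Nat.card_of_isEmpty]

theorem card_goodCut_succ_succ (a b : ℕ) :
    Nat.card (Cut IsGoodCut (a + 1) (b + 1))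
      = Nat.card (BallotPath (a + 1) (b + 1)) + (a + b + 1) * Nat.card (BallotPath a b) := by
  rw [← Nat.card_congr (goodCutEquiv _ _), Nat.card_sum, ← Nat.card_congr (peakCutEquiv a b),
    card_cut_true]

def partialSymPeakMarkedEquiv {n r k a b : ℕ} (hn : n = a + k + 1) (hr : r + b = a) :
    PartialSymPeakMarked n r k ≃ Cut IsGoodCut a b :=
  Equiv.subtypeEquivRight fun q => by
    have hlen := count_true_add_count_false
      (q.1 ++ replicate (k + 1) true ++ replicate (k + 1) false ++ q.2)
    rw [← isBallot_append_mountain_iff (j := k + 1), isBallot_iff, IsGoodCut]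
    constructor
    · rintro ⟨h₁, h₂, h₃, h₄, h₅⟩
      exact ⟨⟨h₃, by omega, by omega⟩, h₁, h₂⟩
    · rintro ⟨⟨h₃, h₄, h₅⟩, h₁, h₂⟩
      exact ⟨h₁, h₂, h₃, by omega, by omega⟩

theorem card_goodCut_mul (r b : ℕ) :
    Nat.card (Cut IsGoodCut (r + b) b) * ((r + b + b) * (r + b + b + 1))
      = (r + 1) * ((r + b) * (b + 1) + 2 * b) * (r + b + b + 1).choose b := by
  rcases b with _ | d
  · rw [add_zero, card_goodCut_zero_right, Nat.choose_zero_right]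
    ring
  rw [show r + (d + 1) = r + d + 1 by ring, card_goodCut_succ_succ]
  have hX := card_ballotPath_mul r (d + 1)
  have hY := card_ballotPath_mul r d
  have h₁ := Nat.choose_mul_succ_eq (r + d + d) d
  have h₂ := Nat.add_one_mul_choose_eq (r + d + d + 1) d
  have h₃ := Nat.choose_mul_succ_eq (r + d + d + 2) (d + 1)
  rw [show r + (d + 1) = r + d + 1 by ring,
    show r + d + 1 + (d + 1) = r + d + d + 2 by ring] at hX
  rw [show r + d + d + 1 - d = r + d + 1 by omega] at h₁
  rw [show r + d + d + 1 + 1 = r + d + d + 2 by ring] at h₂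
  rw [show r + d + d + 2 + 1 - (d + 1) = r + d + 2 by omega] at h₃
  rw [show r + d + 1 + (d + 1) = r + d + d + 2 by ring]
  qify at hX hY h₁ h₂ h₃ ⊢
  rw [eq_div_of_mul_eq (by positivity) hX, eq_div_of_mul_eq (by positivity) hY,
    eq_div_of_mul_eq (by positivity) h₃.symm, eq_div_of_mul_eq (by positivity) h₂.symm,
    eq_div_of_mul_eq (by positivity) h₁.symm]
  field_simp
  ring

end PartialSymPeak

/-- For r, k ≥ 0 and n ≥ k+r+1, the total number of symmetric peaks of weight k+1
over all partial Dyck paths from (0,0) to (2n-r, r) equals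
((r+1)·((n-k+1)(n-k-r) − 2) / ((2(n-k)-r-2)(2(n-k)-r-1))) · binom(2(n-k)-r-1, n-k),
stated here with the denominator cleared. -/
theorem partial_sym_peak_count (n k r : ℕ) (h : k + r + 1 ≤ n) :
    (Nat.card (PartialSymPeakMarked n r k) : ℤ)
        * ((2 * ((n : ℤ) - k) - r - 2) * (2 * ((n : ℤ) - k) - r - 1))
      = ((r : ℤ) + 1) * (((n : ℤ) - k + 1) * ((n : ℤ) - k - r) - 2)
          * (Nat.choose (2 * (n - k) - r - 1) (n - k) : ℤ) := by
  obtain ⟨b, rfl⟩ : ∃ b, n = r + b + k + 1 := ⟨n - (k + r + 1), by omega⟩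
  have key := PartialSymPeak.card_goodCut_mul r b
  rw [← Nat.card_congr (PartialSymPeak.partialSymPeakMarkedEquiv rfl rfl)] at key
  rw [show 2 * (r + b + k + 1 - k) - r - 1 = r + b + b + 1 by omega,
    show r + b + k + 1 - k = r + b + 1 by omega,
    Nat.choose_symm_of_eq_add (show r + b + b + 1 = r + b + 1 + b by ring)]
  have := congrArg (Nat.cast : ℕ → ℤ) key
  push_cast at this ⊢
  linear_combination this
end
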